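/- Let x_1,...,x_n, y_1,...,y_n be vectors in a separable Hilbert space H, and let Σ'_n = n^{-1} ∑_j x_j ⊗ x_j and Σ''_n = n^{-1} ∑_j y_j ⊗ y_j be the corresponding empirical covariance operators. Then ‖Σ'_n − Σ''_n‖₂ ≤ n^{-1/2} (‖Σ'_n‖^{1/2} + ‖Σ''_n‖^{1/2}) (∑_{i=1}^n ‖x_i − y_i‖²)^{1/2}. -/
import Mathlib


open scoped InnerProductSpace

/-- The rank-one operator `x ⊗ y : u ↦ ⟨y, u⟩ x` on a real Hilbert space. -/
noncomputable def rankOne {H : Type*} [NormedAddCommGroup H] [InnerProductSpace ℝ H]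
    (x y : H) : H →L[ℝ] H :=
  (innerSL ℝ y).smulRight x

/-- The Hilbert–Schmidt norm of an operator, computed with respect to a Hilbert basis
(for a separable Hilbert space, indexed by `ℕ`). -/
noncomputable def hsNorm {H : Type*} [NormedAddCommGroup H] [InnerProductSpace ℝ H]
    (b : HilbertBasis ℕ ℝ H) (T : H →L[ℝ] H) : ℝ :=
  Real.sqrt (∑' i : ℕ, ‖T (b i)‖ ^ 2)

section Aux

variable {H : Type*} [NormedAddCommGroup H] [InnerProductSpace ℝ H] [CompleteSpace H]

lemma rankOne_apply (x y u : H) : rankOne x y u = ⟪y, u⟫_ℝ • x := rfl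

lemma sum_rankOne_apply {m : ℕ} (u v : Fin m → H) (w : H) :
    (∑ j, rankOne (u j) (v j)) w = ∑ j, ⟪v j, w⟫_ℝ • u j := by
  simp [rankOne, ContinuousLinearMap.sum_apply]

/-- Key quadratic bound: `‖∑ c_j u_j‖² ≤ ‖∑ u_j ⊗ u_j‖ ∑ c_j²`. -/
lemma key_quadratic {m : ℕ} (u : Fin m → H) (c : Fin m → ℝ) :
    ‖∑ j, c j • u j‖ ^ 2 ≤ ‖∑ j, rankOne (u j) (u j)‖ * ∑ j, c j ^ 2 := by
  set S : H →L[ℝ] H := ∑ j, rankOne (u j) (u j) with hS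
  set v : H := ∑ j, c j • u j with hv
  have hSv : ⟪S v, v⟫_ℝ = ∑ j, ⟪u j, v⟫_ℝ ^ 2 := by
    rw [hS, ContinuousLinearMap.sum_apply, sum_inner]
    refine Finset.sum_congr rfl fun j _ => ?_
    rw [rankOne_apply, real_inner_smul_left, real_inner_comm, sq]
  have hSv_le : ⟪S v, v⟫_ℝ ≤ ‖S‖ * ‖v‖ ^ 2 := by
    calc ⟪S v, v⟫_ℝ ≤ ‖S v‖ * ‖v‖ := real_inner_le_norm _ _
      _ ≤ ‖S‖ * ‖v‖ * ‖v‖ := by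
          have := S.le_opNorm v
          exact mul_le_mul_of_nonneg_right this (norm_nonneg _)
      _ = ‖S‖ * ‖v‖ ^ 2 := by ring
  have hvv : ‖v‖ ^ 2 = ∑ j, c j * ⟪u j, v⟫_ℝ := by
    rw [← real_inner_self_eq_norm_sq]
    nth_rw 1 [hv]
    rw [sum_inner]
    exact Finset.sum_congr rfl fun j _ => real_inner_smul_left _ _ _
  have hCS : (‖v‖ ^ 2) ^ 2 ≤ (∑ j, c j ^ 2) * ∑ j, ⟪u j, v⟫_ℝ ^ 2 := by
    rw [hvv]; exact Finset.sum_mul_sq_le_sq_mul_sq _ _ _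
  have h4 : (‖v‖ ^ 2) ^ 2 ≤ (∑ j, c j ^ 2) * (‖S‖ * ‖v‖ ^ 2) := by
    refine hCS.trans ?_
    have hc : (0:ℝ) ≤ ∑ j, c j ^ 2 := Finset.sum_nonneg fun j _ => sq_nonneg _
    exact mul_le_mul_of_nonneg_left (hSv ▸ hSv_le) hc
  rcases eq_or_lt_of_le (sq_nonneg ‖v‖) with h0 | h0
  · rw [← h0]
    have hc : (0:ℝ) ≤ ∑ j, c j ^ 2 := Finset.sum_nonneg fun j _ => sq_nonneg _
    exact mul_nonneg (norm_nonneg _) hc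
  · have := h4
    rw [sq (‖v‖ ^2), show (∑ j, c j ^ 2) * (‖S‖ * ‖v‖ ^ 2)
        = ‖S‖ * (∑ j, c j ^ 2) * ‖v‖ ^ 2 by ring] at this
    exact le_of_mul_le_mul_right this h0

/-- HS identity: the squared HS sum of `∑ u_j ⊗ v_j` has sum the double Gram sum. -/
lemma hasSum_G (b : HilbertBasis ℕ ℝ H) {m : ℕ} (u v : Fin m → H) :
    HasSum (fun i => ‖(∑ j, rankOne (u j) (v j)) (b i)‖ ^ 2)
      (∑ j, ∑ k, ⟪u j, u k⟫_ℝ * ⟪v j, v k⟫_ℝ) := by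
  have key : ∀ i, ‖(∑ j, rankOne (u j) (v j)) (b i)‖ ^ 2
      = ∑ j, ∑ k, ⟪u j, u k⟫_ℝ * (⟪v j, b i⟫_ℝ * ⟪b i, v k⟫_ℝ) := by
    intro i
    rw [← real_inner_self_eq_norm_sq, sum_rankOne_apply, sum_inner]
    refine Finset.sum_congr rfl fun j _ => ?_
    rw [inner_sum]
    refine Finset.sum_congr rfl fun k _ => ?_
    rw [real_inner_smul_left, real_inner_smul_right, real_inner_comm (b i) (v k)]
    ring
  have h : HasSum (fun i => ∑ j, ∑ k, ⟪u j, u k⟫_ℝ * (⟪v j, b i⟫_ℝ * ⟪b i, v k⟫_ℝ))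
      (∑ j, ∑ k, ⟪u j, u k⟫_ℝ * ⟪v j, v k⟫_ℝ) := by
    refine hasSum_sum fun j _ => hasSum_sum fun k _ => ?_
    exact (b.hasSum_inner_mul_inner (v j) (v k)).mul_left _
  exact h.congr_fun fun i => key i

lemma G_symm {m : ℕ} (u v : Fin m → H) :
    ∑ j, ∑ k, ⟪u j, u k⟫_ℝ * ⟪v j, v k⟫_ℝ = ∑ j, ∑ k, ⟪v j, v k⟫_ℝ * ⟪u j, u k⟫_ℝ := by
  refine Finset.sum_congr rfl fun j _ => Finset.sum_congr rfl fun k _ => (mul_comm _ _)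

/-- Gram sum bound: `G(u, v) ≤ ‖∑ u ⊗ u‖ ∑ ‖v_j‖²`. -/
lemma G_le (b : HilbertBasis ℕ ℝ H) {m : ℕ} (u v : Fin m → H) :
    ∑ j, ∑ k, ⟪u j, u k⟫_ℝ * ⟪v j, v k⟫_ℝ ≤ ‖∑ j, rankOne (u j) (u j)‖ * ∑ j, ‖v j‖ ^ 2 := by
  have h1 := hasSum_G b u v
  have h2 : HasSum (fun i => ‖∑ j, rankOne (u j) (u j)‖ * ∑ j, ⟪v j, b i⟫_ℝ ^ 2)
      (‖∑ j, rankOne (u j) (u j)‖ * ∑ j, ‖v j‖ ^ 2) := by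
    refine HasSum.mul_left _ (hasSum_sum fun j _ => ?_)
    have := b.hasSum_inner_mul_inner (v j) (v j)
    rw [real_inner_self_eq_norm_sq] at this
    refine this.congr_fun fun i => ?_
    rw [sq, real_inner_comm (b i) (v j)]
  refine hasSum_le (fun i => ?_) h1 h2
  rw [sum_rankOne_apply]
  exact key_quadratic u _

/-- HS norm bound for sums of rank-one operators. -/
lemma hsNorm_sum_rankOne_le (b : HilbertBasis ℕ ℝ H) {m : ℕ} (u v : Fin m → H) :
    hsNorm b (∑ j, rankOne (u j) (v j)) ≤
      Real.sqrt ‖∑ j, rankOne (u j) (u j)‖ * Real.sqrt (∑ j, ‖v j‖ ^ 2) := by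
  rw [hsNorm, (hasSum_G b u v).tsum_eq, ← Real.sqrt_mul (norm_nonneg _)]
  exact Real.sqrt_le_sqrt (G_le b u v)

/-- swapped version -/
lemma hsNorm_sum_rankOne_le' (b : HilbertBasis ℕ ℝ H) {m : ℕ} (u v : Fin m → H) :
    hsNorm b (∑ j, rankOne (u j) (v j)) ≤
      Real.sqrt ‖∑ j, rankOne (v j) (v j)‖ * Real.sqrt (∑ j, ‖u j‖ ^ 2) := by
  rw [hsNorm, (hasSum_G b u v).tsum_eq, G_symm, ← Real.sqrt_mul (norm_nonneg _)]
  exact Real.sqrt_le_sqrt (G_le b v u)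

/-- Triangle inequality for `hsNorm`, given summability of the two squared HS sums. -/
lemma hsNorm_add_le (b : HilbertBasis ℕ ℝ H) (T₁ T₂ : H →L[ℝ] H)
    (h1 : Summable fun i => ‖T₁ (b i)‖ ^ 2) (h2 : Summable fun i => ‖T₂ (b i)‖ ^ 2) :
    hsNorm b (T₁ + T₂) ≤ hsNorm b T₁ + hsNorm b T₂ := by
  set f : ℕ → ℝ := fun i => ‖T₁ (b i)‖
  set g : ℕ → ℝ := fun i => ‖T₂ (b i)‖
  have hfg : Summable fun i => f i * g i := by
    refine Summable.of_nonneg_of_le (fun i => mul_nonneg (norm_nonneg _) (norm_nonneg _))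
      (fun i => ?_) ((h1.add h2).div_const 2)
    have := sq_nonneg (f i - g i)
    simp only [f, g]
    nlinarith [norm_nonneg (T₁ (b i)), norm_nonneg (T₂ (b i))]
  have hCS : ∑' i, f i * g i ≤ Real.sqrt (∑' i, f i ^ 2) * Real.sqrt (∑' i, g i ^ 2) := by
    refine Summable.tsum_le_of_sum_le hfg fun s => ?_
    calc ∑ i ∈ s, f i * g i
        ≤ Real.sqrt (∑ i ∈ s, f i ^ 2) * Real.sqrt (∑ i ∈ s, g i ^ 2) :=
          Real.sum_mul_le_sqrt_mul_sqrt s f g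
      _ ≤ Real.sqrt (∑' i, f i ^ 2) * Real.sqrt (∑' i, g i ^ 2) := by
          refine mul_le_mul (Real.sqrt_le_sqrt (Summable.sum_le_tsum s (fun i _ => sq_nonneg _) h1))
            (Real.sqrt_le_sqrt (Summable.sum_le_tsum s (fun i _ => sq_nonneg _) h2))
            (Real.sqrt_nonneg _) (Real.sqrt_nonneg _)
  have hsum : Summable fun i => (f i + g i) ^ 2 := by
    have : (fun i => (f i + g i) ^ 2) = fun i => f i ^ 2 + 2 * (f i * g i) + g i ^ 2 := by
      funext i; ring
    rw [this]
    exact (h1.add ((hfg.mul_left 2))).add h2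
  have hle : ∀ i, ‖(T₁ + T₂) (b i)‖ ^ 2 ≤ (f i + g i) ^ 2 := by
    intro i
    have h := norm_add_le (T₁ (b i)) (T₂ (b i))
    have : ‖(T₁ + T₂) (b i)‖ = ‖T₁ (b i) + T₂ (b i)‖ := rfl
    rw [this]
    exact pow_le_pow_left₀ (norm_nonneg _) h 2
  have htsum : ∑' i, ‖(T₁ + T₂) (b i)‖ ^ 2 ≤
      (Real.sqrt (∑' i, f i ^ 2) + Real.sqrt (∑' i, g i ^ 2)) ^ 2 := by
    calc ∑' i, ‖(T₁ + T₂) (b i)‖ ^ 2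
        ≤ ∑' i, (f i + g i) ^ 2 :=
          Summable.tsum_le_tsum hle (Summable.of_nonneg_of_le (fun i => sq_nonneg _) hle hsum) hsum
      _ = ∑' i, (f i ^ 2 + 2 * (f i * g i) + g i ^ 2) := by
          refine tsum_congr fun i => by ring
      _ = (∑' i, f i ^ 2) + 2 * (∑' i, f i * g i) + ∑' i, g i ^ 2 := by
          rw [Summable.tsum_add (h1.add (hfg.mul_left 2)) h2, Summable.tsum_add h1 (hfg.mul_left 2),
            tsum_mul_left]
      _ ≤ (∑' i, f i ^ 2) + 2 * Real.sqrt (∑' i, f i ^ 2) * Real.sqrt (∑' i, g i ^ 2)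
            + ∑' i, g i ^ 2 := by nlinarith [hCS]
      _ = (Real.sqrt (∑' i, f i ^ 2) + Real.sqrt (∑' i, g i ^ 2)) ^ 2 := by
          rw [add_sq, Real.sq_sqrt (tsum_nonneg fun i => sq_nonneg _),
            Real.sq_sqrt (tsum_nonneg fun i => sq_nonneg _)]
  rw [hsNorm, hsNorm, hsNorm]
  calc Real.sqrt (∑' i, ‖(T₁ + T₂) (b i)‖ ^ 2)
      ≤ Real.sqrt ((Real.sqrt (∑' i, f i ^ 2) + Real.sqrt (∑' i, g i ^ 2)) ^ 2) :=
        Real.sqrt_le_sqrt htsum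
    _ = Real.sqrt (∑' i, f i ^ 2) + Real.sqrt (∑' i, g i ^ 2) :=
        Real.sqrt_sq (by positivity)

end Aux

/-- For the empirical covariance operators
`Σ'_n = n⁻¹ ∑ x_j ⊗ x_j` and `Σ''_n = n⁻¹ ∑ y_j ⊗ y_j`,
`‖Σ'_n − Σ''_n‖₂ ≤ n^{-1/2} (‖Σ'_n‖^{1/2} + ‖Σ''_n‖^{1/2}) (∑ ‖x_i − y_i‖²)^{1/2}`. -/
theorem hsNorm_empCov_sub_le {H : Type*} [NormedAddCommGroup H] [InnerProductSpace ℝ H]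
    [CompleteSpace H] (b : HilbertBasis ℕ ℝ H) (n : ℕ) (hn : 0 < n) (x y : Fin n → H) :
    hsNorm b ((n : ℝ)⁻¹ • ∑ j, rankOne (x j) (x j) - (n : ℝ)⁻¹ • ∑ j, rankOne (y j) (y j)) ≤
      (Real.sqrt n)⁻¹ *
        (Real.sqrt ‖(n : ℝ)⁻¹ • ∑ j, rankOne (x j) (x j)‖ +
          Real.sqrt ‖(n : ℝ)⁻¹ • ∑ j, rankOne (y j) (y j)‖) *
        Real.sqrt (∑ i, ‖x i - y i‖ ^ 2) := by
  have hn' : (0:ℝ) < n := Nat.cast_pos.mpr hn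
  set δ : Fin n → H := fun j => x j - y j with hδ
  set A : H →L[ℝ] H := ∑ j, rankOne (x j) ((n : ℝ)⁻¹ • δ j) with hA
  set B : H →L[ℝ] H := ∑ j, rankOne ((n : ℝ)⁻¹ • δ j) (y j) with hB
  -- decomposition
  have hdec : (n : ℝ)⁻¹ • ∑ j, rankOne (x j) (x j) - (n : ℝ)⁻¹ • ∑ j, rankOne (y j) (y j)
      = A + B := by
    ext u
    simp only [ContinuousLinearMap.sub_apply, ContinuousLinearMap.smul_apply,
      ContinuousLinearMap.add_apply, hA, hB, ContinuousLinearMap.sum_apply, rankOne_apply,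
      Finset.smul_sum, ← Finset.sum_sub_distrib, ← Finset.sum_add_distrib]
    refine Finset.sum_congr rfl fun j _ => ?_
    simp only [hδ, real_inner_smul_left, inner_sub_left, smul_smul, smul_sub, sub_smul]
    ring_nf
    module
  rw [hdec]
  -- summability for triangle inequality
  have hsumA : Summable fun i => ‖A (b i)‖ ^ 2 := (hasSum_G b _ _).summable
  have hsumB : Summable fun i => ‖B (b i)‖ ^ 2 := (hasSum_G b _ _).summable
  have htri := hsNorm_add_le b A B hsumA hsumB
  -- bounds for A and B
  have hsq : (∑ j, ‖(n : ℝ)⁻¹ • δ j‖ ^ 2) = (n : ℝ)⁻¹ ^ 2 * ∑ j, ‖δ j‖ ^ 2 := by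
    rw [Finset.mul_sum]
    refine Finset.sum_congr rfl fun j _ => ?_
    rw [norm_smul, mul_pow, Real.norm_eq_abs, sq_abs]
  have hdelta_nonneg : (0:ℝ) ≤ ∑ j, ‖δ j‖ ^ 2 := Finset.sum_nonneg fun j _ => sq_nonneg _
  have hsqrt_sq : Real.sqrt (∑ j, ‖(n : ℝ)⁻¹ • δ j‖ ^ 2)
      = (n : ℝ)⁻¹ * Real.sqrt (∑ j, ‖δ j‖ ^ 2) := by
    rw [hsq, Real.sqrt_mul (by positivity), Real.sqrt_sq (by positivity)]
  -- relating norms : ‖∑ x⊗x‖ = n * ‖n⁻¹ • ∑ x⊗x‖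
  have hnorm : ∀ S : H →L[ℝ] H, ‖S‖ = (n:ℝ) * ‖(n : ℝ)⁻¹ • S‖ := by
    intro S
    rw [norm_smul ((n:ℝ)⁻¹) S, Real.norm_eq_abs, abs_of_pos (by positivity : (0:ℝ) < (n:ℝ)⁻¹)]
    field_simp
  have hsqrtnorm : ∀ S : H →L[ℝ] H, Real.sqrt ‖S‖
      = Real.sqrt n * Real.sqrt ‖(n : ℝ)⁻¹ • S‖ := by
    intro S
    rw [hnorm S, Real.sqrt_mul (by positivity)]
  have hAle : hsNorm b A ≤ Real.sqrt ‖∑ j, rankOne (x j) (x j)‖ *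
      ((n : ℝ)⁻¹ * Real.sqrt (∑ j, ‖δ j‖ ^ 2)) := by
    have := hsNorm_sum_rankOne_le b x (fun j => (n : ℝ)⁻¹ • δ j)
    rwa [hsqrt_sq] at this
  have hBle : hsNorm b B ≤ Real.sqrt ‖∑ j, rankOne (y j) (y j)‖ *
      ((n : ℝ)⁻¹ * Real.sqrt (∑ j, ‖δ j‖ ^ 2)) := by
    have := hsNorm_sum_rankOne_le' b (fun j => (n : ℝ)⁻¹ • δ j) y
    rwa [hsqrt_sq] at this
  have hfinal : hsNorm b (A + B) ≤
      (Real.sqrt ‖∑ j, rankOne (x j) (x j)‖ + Real.sqrt ‖∑ j, rankOne (y j) (y j)‖) *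
        ((n : ℝ)⁻¹ * Real.sqrt (∑ j, ‖δ j‖ ^ 2)) := by
    rw [add_mul]
    exact htri.trans (add_le_add hAle hBle)
  refine hfinal.trans (le_of_eq ?_)
  rw [hsqrtnorm (∑ j, rankOne (x j) (x j)), hsqrtnorm (∑ j, rankOne (y j) (y j))]
  have hsn : Real.sqrt n * (n:ℝ)⁻¹ = (Real.sqrt n)⁻¹ := by
    have h0 : Real.sqrt n ≠ 0 := by positivity
    rw [show ((n:ℝ))⁻¹ = ((Real.sqrt n) * (Real.sqrt n))⁻¹ by
        rw [Real.mul_self_sqrt hn'.le], mul_inv]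
    field_simp
  rw [← hsn]
  ring
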